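/- arXiv:1606.01577 — 3 statements merged into one kernel-verified Lean document; each statement's English description precedes it below -/
import Mathlib

section
/- For a finite weighted graph, any vertex $x$ with $\sum_{w\neq x} c_{xw}>0$, and any $f:V\to\mathbb{R}$: $\sum_{y\neq x} c_{xy}[f(x)-f(y)]^2 \geq \sum_{\{y,z\}\subseteq V\setminus\{x\}} c^{*,x}_{yz}[f(y)-f(z)]^2$, where $c^{*,x}_{yz} = c_{yx}c_{xz}/\sum_{w\neq x} c_{xw}$. Moreover, equality holds if and only if $\sum_{y\neq x} c_{xy}[f(y)-f(x)]=0$. -/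
/-!
With `S = ∑ c x y`, `Q = ∑ c x y (f x - f y)²` and `T = ∑ c x y (f y - f x)`, expanding the square in
the double sum (a weighted variance identity) shows that the star sum equals `Q - T² / S`.
So the gap in the inequality is `T² / S ≥ 0`, which vanishes exactly when `T = 0`.
-/

open Finset

theorem Finset.sum_sum_mul_mul_sub_sq {ι R : Type*} [CommRing R] (s : Finset ι) (a u : ι → R) :
    ∑ y ∈ s, ∑ z ∈ s, a y * a z * (u y - u z) ^ 2
      = 2 * (∑ y ∈ s, a y) * (∑ y ∈ s, a y * u y ^ 2) - 2 * (∑ y ∈ s, a y * u y) ^ 2 := by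
  have h : ∀ y z, a y * a z * (u y - u z) ^ 2
      = a z * (a y * u y ^ 2) + a y * (a z * u z ^ 2) - 2 * (a y * u y) * (a z * u z) := by
    intro y z; ring
  simp only [h, sum_sub_distrib, sum_add_distrib, ← mul_sum, ← sum_mul]
  ring

theorem Finset.half_sum_sum_mul_mul_div_sub_sq {ι K : Type*} [Field K] [NeZero (2 : K)]
    (s : Finset ι) (a g : ι → K) (t : K) (hs : ∑ w ∈ s, a w ≠ 0) :
    (1 / 2) * ∑ y ∈ s, ∑ z ∈ s, (a y * a z / ∑ w ∈ s, a w) * (g y - g z) ^ 2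
      = ∑ y ∈ s, a y * (t - g y) ^ 2 - (∑ y ∈ s, a y * (g y - t)) ^ 2 / ∑ w ∈ s, a w := by
  have h := s.sum_sum_mul_mul_sub_sq a (fun y => g y - t)
  simp only [sub_sub_sub_cancel_right, sub_sq_comm _ t] at h
  simp only [div_mul_eq_mul_div, ← sum_div, h]
  field_simp

theorem star_reduction_inequality_general {V : Type*} [Fintype V] [DecidableEq V]
    (c : V → V → ℝ) (hsymm : ∀ z w, c z w = c w z) (x : V)
    (hx : 0 < ∑ w ∈ univ.erase x, c x w) (f : V → ℝ) :
    (1 / 2) * ∑ y ∈ univ.erase x, ∑ z ∈ univ.erase x,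
        (c y x * c x z / ∑ w ∈ univ.erase x, c x w) * (f y - f z) ^ 2
      ≤ ∑ y ∈ univ.erase x, c x y * (f x - f y) ^ 2
    ∧ (∑ y ∈ univ.erase x, c x y * (f x - f y) ^ 2 =
        (1 / 2) * ∑ y ∈ univ.erase x, ∑ z ∈ univ.erase x,
          (c y x * c x z / ∑ w ∈ univ.erase x, c x w) * (f y - f z) ^ 2
        ↔ ∑ y ∈ univ.erase x, c x y * (f y - f x) = 0) := by
  simp only [hsymm _ x]
  rw [half_sum_sum_mul_mul_div_sub_sq _ _ f (f x) hx.ne']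
  set T := ∑ y ∈ univ.erase x, c x y * (f y - f x)
  have hdefect : 0 ≤ T ^ 2 / ∑ w ∈ univ.erase x, c x w := by positivity
  refine ⟨sub_le_self _ hdefect, ?_⟩
  rw [eq_comm, sub_eq_self, div_eq_zero_iff, or_iff_left hx.ne', pow_eq_zero_iff two_ne_zero]

theorem star_reduction_inequality {V : Type*} [Fintype V] [DecidableEq V]
    (c : V → V → ℝ) (hnn : ∀ z w, 0 ≤ c z w) (hsymm : ∀ z w, c z w = c w z)
    (hdiag : ∀ z, c z z = 0) (x : V)
    (hx : 0 < ∑ w ∈ univ.erase x, c x w) (f : V → ℝ) :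
    (1 / 2) * ∑ y ∈ univ.erase x, ∑ z ∈ univ.erase x,
        (c y x * c x z / ∑ w ∈ univ.erase x, c x w) * (f y - f z) ^ 2
      ≤ ∑ y ∈ univ.erase x, c x y * (f x - f y) ^ 2
    ∧ (∑ y ∈ univ.erase x, c x y * (f x - f y) ^ 2 =
        (1 / 2) * ∑ y ∈ univ.erase x, ∑ z ∈ univ.erase x,
          (c y x * c x z / ∑ w ∈ univ.erase x, c x w) * (f y - f z) ^ 2
        ↔ ∑ y ∈ univ.erase x, c x y * (f y - f x) = 0) :=
  star_reduction_inequality_general c hsymm x hx f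
end

section
/- Monotonicity of the interchange-process Dirichlet energy under network reduction: assuming the octopus inequality, for any $f:S_V\to\mathbb{R}$ and vertex $x$ with $c_x>0$, $\frac12\sum_{\{z,w\}\subseteq V} c_{zw}\,\nu[(\nabla_{zw}f)^2] \geq \frac12\sum_{\{y,z\}\subseteq V\setminus\{x\}} \tilde{c}_{yz}\,\nu[(\nabla_{yz}f)^2]$, where $\nabla_{ab}f(\eta)=f(\eta\tau_{ab})-f(\eta)$ and $\tilde{c}_{yz}=c_{yz}+c_{yx}c_{xz}/c_x$. -/
open Finset

noncomputable section

def permExp {V : Type*} [Fintype V] [DecidableEq V] (g : Equiv.Perm V → ℝ) : ℝ :=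
  (∑ η : Equiv.Perm V, g η) / (Fintype.card (Equiv.Perm V))

/-!
Removing `x` from the double sum over ordered pairs leaves the energy of the edges inside
`V \ {x}` plus twice the energy of the star at `x`. The conductances `c̃` add to the former
exactly the star-mesh weights `c_{yx} c_{xz} / c_x`, and the octopus inequality says that the
star at `x` carries at least that much energy.
-/

theorem Finset.sum_sum_eq_sum_sum_erase_add_two_nsmul {ι M : Type*} [DecidableEq ι]
    [AddCommMonoid M] {s : Finset ι} {x : ι} (hx : x ∈ s) (a : ι → ι → M)
    (hsymm : ∀ y, a y x = a x y) (hdiag : a x x = 0) :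
    ∑ y ∈ s, ∑ z ∈ s, a y z =
      ∑ y ∈ s.erase x, ∑ z ∈ s.erase x, a y z + 2 • ∑ y ∈ s.erase x, a x y := by
  simp only [← sum_erase_add s _ hx, sum_add_distrib, hsymm, hdiag, add_zero, two_nsmul,
    add_assoc]

theorem ipEnergy_mono_reduction_general {V : Type*} [Fintype V] [DecidableEq V]
    (c : V → V → ℝ) (hsymm : ∀ z w, c z w = c w z)
    (hdiag : ∀ z, c z z = 0) (x : V)
    (f : Equiv.Perm V → ℝ)
    (octopus : ∑ y ∈ univ.erase x, c x y *
        permExp (fun η => (f (η * Equiv.swap x y) - f η) ^ 2) ≥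
      (1 / 2) * ∑ y ∈ univ.erase x, ∑ z ∈ univ.erase x,
        (c y x * c x z / ∑ w ∈ univ.erase x, c x w) *
          permExp (fun η => (f (η * Equiv.swap y z) - f η) ^ 2)) :
    (1 / 2) * ((1 / 2) * ∑ z, ∑ w, c z w *
        permExp (fun η => (f (η * Equiv.swap z w) - f η) ^ 2)) ≥
      (1 / 2) * ((1 / 2) * ∑ y ∈ univ.erase x, ∑ z ∈ univ.erase x,
        (c y z + c y x * c x z / ∑ w ∈ univ.erase x, c x w) *
          permExp (fun η => (f (η * Equiv.swap y z) - f η) ^ 2)) := by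
  set E : V → V → ℝ := fun a b => permExp fun η => (f (η * Equiv.swap a b) - f η) ^ 2
  have hE : ∀ y, E y x = E x y := fun y => by simp only [E, Equiv.swap_comm]
  have hsplit := sum_sum_eq_sum_sum_erase_add_two_nsmul (mem_univ x) (fun z w => c z w * E z w)
    (fun y => by rw [hsymm, hE]) (by simp only [hdiag, zero_mul])
  simp only [add_mul, sum_add_distrib]
  rw [hsplit, two_nsmul]
  linarith

theorem ipEnergy_mono_reduction {V : Type*} [Fintype V] [DecidableEq V]
    (c : V → V → ℝ) (hnn : ∀ z w, 0 ≤ c z w) (hsymm : ∀ z w, c z w = c w z)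
    (hdiag : ∀ z, c z z = 0) (x : V)
    (hx : 0 < ∑ w ∈ univ.erase x, c x w)
    (f : Equiv.Perm V → ℝ)
    (octopus : ∑ y ∈ univ.erase x, c x y *
        permExp (fun η => (f (η * Equiv.swap x y) - f η) ^ 2) ≥
      (1 / 2) * ∑ y ∈ univ.erase x, ∑ z ∈ univ.erase x,
        (c y x * c x z / ∑ w ∈ univ.erase x, c x w) *
          permExp (fun η => (f (η * Equiv.swap y z) - f η) ^ 2)) :
    (1 / 2) * ((1 / 2) * ∑ z, ∑ w, c z w *
        permExp (fun η => (f (η * Equiv.swap z w) - f η) ^ 2)) ≥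
      (1 / 2) * ((1 / 2) * ∑ y ∈ univ.erase x, ∑ z ∈ univ.erase x,
        (c y z + c y x * c x z / ∑ w ∈ univ.erase x, c x w) *
          permExp (fun η => (f (η * Equiv.swap y z) - f η) ^ 2)) :=
  ipEnergy_mono_reduction_general c hsymm hdiag x f octopus
end
end

section
/- Lower bound on effective resistance via the exclusion Dirichlet form: on a finite connected weighted graph, for any $x\neq y$ and $\alpha\in(0,1)$, $R_{\mathrm{eff}}(x,y) \geq \sup\left\{ \frac{\nu_\alpha[(f(\zeta^{xy})-f(\zeta))^2]}{\sum_{\{z,w\}}c_{zw}\,\nu_\alpha[(f(\zeta^{zw})-f(\zeta))^2]} : f:\{0,1\}^V\to\mathbb{R},\ \nu_\alpha[(f(\zeta^{xy})-f(\zeta))^2]>0 \right\}$. -/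
open Finset

noncomputable section

def elEnergy {V : Type*} [Fintype V] (c : V → V → ℝ) (h : V → ℝ) : ℝ :=
  (1 / 2) * ∑ z, ∑ w, c z w * (h z - h w) ^ 2

def ceff {V : Type*} [Fintype V] (c : V → V → ℝ) (x y : V) : ℝ :=
  sInf {E : ℝ | ∃ h : V → ℝ, h x = 1 ∧ h y = 0 ∧ elEnergy c h = E}

def bweight {V : Type*} [Fintype V] (α : ℝ) (ζ : V → Bool) : ℝ :=
  ∏ x, if ζ x then α else 1 - α

def bexp {V : Type*} [Fintype V] [DecidableEq V] (α : ℝ) (g : (V → Bool) → ℝ) : ℝ :=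
  ∑ ζ : V → Bool, bweight α ζ * g ζ

/-!
Fix `f` and put `d(a, b) = ν_α[(f(ζ^{ab}) - f(ζ))²]^{1/2}`. This is a pseudometric on `V`: its
triangle inequality is the moving particle lemma for three sites, which for `{0,1}`-valued
configurations holds with constant `1`. The potential `h = d(·, y) / d(x, y)` satisfies `h x = 1`,
`h y = 0` and `|h z - h w| ≤ d(z, w) / d(x, y)`, so its electric energy is at most the exclusion
Dirichlet form of `f` divided by `d(x, y)²`; hence `C_eff(x, y) · ν_α[(f(ζ^{xy}) - f(ζ))²]` is at
most that Dirichlet form. Connectivity makes `C_eff(x, y)` positive, so this is the bound.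
-/

theorem Real.sqrt_sum_mul_add_sq_le {ι : Type*} [Fintype ι] {ν : ι → ℝ} (hν : ∀ i, 0 ≤ ν i)
    (u v : ι → ℝ) :
    √(∑ i, ν i * (u i + v i) ^ 2) ≤ √(∑ i, ν i * u i ^ 2) + √(∑ i, ν i * v i ^ 2) := by
  have := norm_add_le (WithLp.toLp 2 fun i => √(ν i) * u i : EuclideanSpace ℝ ι)
    (WithLp.toLp 2 fun i => √(ν i) * v i)
  simpa [EuclideanSpace.norm_eq, ← mul_add, mul_pow, Real.sq_sqrt (hν _)] using this

theorem Fintype.sum_ite_add_ite_comp_le {α : Type*} [Fintype α] {σ : α → α}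
    (hσ : Function.Involutive σ) {p q : α → Prop} [DecidablePred p] [DecidablePred q]
    (hpq : ∀ a, q a → ¬p (σ a)) {G : α → ℝ} (hG : ∀ a, 0 ≤ G a) :
    ∑ a, ((if p a then G a else 0) + if q a then G (σ a) else 0) ≤ ∑ a, G a := by
  have hreindex : ∑ a, (if q a then G (σ a) else 0) = ∑ a, if q (σ a) then G a else 0 :=
    Fintype.sum_bijective σ hσ.bijective _ _ fun a => by rw [hσ a]
  rw [sum_add_distrib, hreindex, ← sum_add_distrib]
  refine sum_le_sum fun a _ => ?_
  have := hpq (σ a)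
  rw [hσ a] at this
  split_ifs <;> simp_all

section SwapIdentities

variable {V β : Type*} [DecidableEq V] {x w z : V} {ζ : V → β}

theorem comp_swap_eq_self (h : ζ x = ζ z) : ζ ∘ Equiv.swap x z = ζ := by
  ext v; simp only [Function.comp_apply, Equiv.swap_apply_def]; grind

theorem comp_swap_eq_comp_swap_comp_swap_of_eq_right (h : ζ w = ζ z) :
    ζ ∘ Equiv.swap x z = (ζ ∘ Equiv.swap x w) ∘ Equiv.swap w z := by
  ext v; simp only [Function.comp_apply, Equiv.swap_apply_def]; grind

theorem comp_swap_eq_comp_swap_comp_swap_of_eq_left (h : ζ x = ζ w) :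
    ζ ∘ Equiv.swap x z = (ζ ∘ Equiv.swap w z) ∘ Equiv.swap x w := by
  ext v; simp only [Function.comp_apply, Equiv.swap_apply_def]; grind

theorem comp_swap_involutive (x z : V) :
    Function.Involutive fun ζ : V → β => ζ ∘ Equiv.swap x z :=
  fun ζ => by ext; simp

end SwapIdentities

section Exclusion

variable {V : Type*} [Fintype V] {α : ℝ}

theorem bweight_nonneg (hα0 : 0 ≤ α) (hα1 : α ≤ 1) (ζ : V → Bool) : 0 ≤ bweight α ζ :=
  prod_nonneg fun v _ => by split_ifs <;> linarith

theorem bweight_comp_perm (σ : Equiv.Perm V) (ζ : V → Bool) :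
    bweight α (ζ ∘ σ) = bweight α ζ :=
  Equiv.prod_comp σ fun v => if ζ v then α else 1 - α

variable [DecidableEq V]

theorem bexp_sq_ite_add_ite_comp_swap_le (hα0 : 0 ≤ α) (hα1 : α ≤ 1) (a b : V)
    {p q : (V → Bool) → Prop} [DecidablePred p] [DecidablePred q]
    (hdisj : ∀ ζ, p ζ → ¬q ζ) (hpq : ∀ ζ, q ζ → ¬p (ζ ∘ Equiv.swap a b))
    (g : (V → Bool) → ℝ) :
    bexp α (fun ζ => ((if p ζ then g ζ else 0) + if q ζ then g (ζ ∘ Equiv.swap a b) else 0) ^ 2)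
      ≤ bexp α fun ζ => g ζ ^ 2 := by
  set G : (V → Bool) → ℝ := fun ζ => bweight α ζ * g ζ ^ 2
  calc _ = ∑ ζ, ((if p ζ then G ζ else 0) + if q ζ then G (ζ ∘ Equiv.swap a b) else 0) := by
        refine sum_congr rfl fun ζ _ => ?_
        simp only [G, bweight_comp_perm]
        have := hdisj ζ
        split_ifs <;> simp_all
    _ ≤ ∑ ζ, G ζ := Fintype.sum_ite_add_ite_comp_le (comp_swap_involutive a b) hpq
        fun ζ => mul_nonneg (bweight_nonneg hα0 hα1 ζ) (sq_nonneg _)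

def swapEnergy (α : ℝ) (f : (V → Bool) → ℝ) (a b : V) : ℝ :=
  bexp α fun ζ => (f (ζ ∘ Equiv.swap a b) - f ζ) ^ 2

def swapDist (α : ℝ) (f : (V → Bool) → ℝ) (a b : V) : ℝ :=
  √(swapEnergy α f a b)

variable {f : (V → Bool) → ℝ}

theorem swapEnergy_nonneg (hα0 : 0 ≤ α) (hα1 : α ≤ 1) (a b : V) : 0 ≤ swapEnergy α f a b :=
  sum_nonneg fun ζ _ => mul_nonneg (bweight_nonneg hα0 hα1 ζ) (sq_nonneg _)

theorem sq_swapDist (hα0 : 0 ≤ α) (hα1 : α ≤ 1) (a b : V) :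
    swapDist α f a b ^ 2 = swapEnergy α f a b :=
  Real.sq_sqrt (swapEnergy_nonneg hα0 hα1 a b)

theorem swapDist_self (a : V) : swapDist α f a a = 0 := by
  simp [swapDist, swapEnergy, bexp]

theorem swapDist_comm (a b : V) : swapDist α f a b = swapDist α f b a := by
  rw [swapDist, swapDist, swapEnergy, Equiv.swap_comm, swapEnergy]

theorem swapDist_triangle (hα0 : 0 ≤ α) (hα1 : α ≤ 1) (x w z : V) :
    swapDist α f x z ≤ swapDist α f x w + swapDist α f w z := by
  set A : (V → Bool) → Prop := fun ζ => ζ w = ζ z ∧ ζ x ≠ ζ w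
  set B : (V → Bool) → Prop := fun ζ => ζ x = ζ w ∧ ζ w ≠ ζ z
  set inc : V → V → (V → Bool) → ℝ := fun a b ζ => f (ζ ∘ Equiv.swap a b) - f ζ
  set u : (V → Bool) → ℝ := fun ζ =>
    (if B ζ then inc w z ζ else 0) + if A ζ then inc w z (ζ ∘ Equiv.swap x w) else 0
  set v : (V → Bool) → ℝ := fun ζ =>
    (if A ζ then inc x w ζ else 0) + if B ζ then inc x w (ζ ∘ Equiv.swap w z) else 0
  -- Two of the three values `ζ x, ζ w, ζ z` agree, so one of the three transpositions in
  -- `(x z) = (x w) (w z) (x w)` acts trivially on `ζ`.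
  have hdecomp : ∀ ζ, inc x z ζ = u ζ + v ζ := by
    intro ζ
    by_cases hA : A ζ
    · simp only [u, v, inc, if_pos hA, if_neg fun hB : B ζ => hA.2 hB.1,
        comp_swap_eq_comp_swap_comp_swap_of_eq_right hA.1]
      ring
    by_cases hB : B ζ
    · simp only [u, v, inc, if_pos hB, if_neg hA,
        comp_swap_eq_comp_swap_comp_swap_of_eq_left hB.1]
      ring
    have hxz : ζ x = ζ z := by
      simp only [A, B] at hA hB
      revert hA hB; cases ζ x <;> cases ζ w <;> cases ζ z <;> simp
    simp [u, v, inc, hA, hB, comp_swap_eq_self hxz]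
  have hu : bexp α (fun ζ => u ζ ^ 2) ≤ swapEnergy α f w z :=
    bexp_sq_ite_add_ite_comp_swap_le hα0 hα1 x w (fun ζ hB hA => hA.2 hB.1)
      (fun ζ hA hB => by simp_all [A, B]) (inc w z)
  have hv : bexp α (fun ζ => v ζ ^ 2) ≤ swapEnergy α f x w :=
    bexp_sq_ite_add_ite_comp_swap_le hα0 hα1 w z (fun ζ hA hB => hA.2 hB.1)
      (fun ζ hB hA => by simp_all [A, B]) (inc x w)
  calc swapDist α f x z = √(bexp α fun ζ => (u ζ + v ζ) ^ 2) := by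
        simp only [swapDist, swapEnergy, ← hdecomp, inc]
    _ ≤ √(bexp α fun ζ => u ζ ^ 2) + √(bexp α fun ζ => v ζ ^ 2) :=
        Real.sqrt_sum_mul_add_sq_le (bweight_nonneg hα0 hα1) u v
    _ ≤ swapDist α f w z + swapDist α f x w :=
        add_le_add (Real.sqrt_le_sqrt hu) (Real.sqrt_le_sqrt hv)
    _ = swapDist α f x w + swapDist α f w z := add_comm _ _

theorem abs_swapDist_sub_le (hα0 : 0 ≤ α) (hα1 : α ≤ 1) (y z w : V) :
    |swapDist α f z y - swapDist α f w y| ≤ swapDist α f z w := by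
  have h₁ := swapDist_triangle (f := f) hα0 hα1 z w y
  have h₂ := swapDist_triangle (f := f) hα0 hα1 w z y
  rw [swapDist_comm w z] at h₂
  exact abs_sub_le_iff.2 ⟨by linarith, by linarith⟩

end Exclusion

section Resistance

variable {V : Type*} [Fintype V] {c : V → V → ℝ}

theorem elEnergy_nonneg (hnn : ∀ z w, 0 ≤ c z w) (h : V → ℝ) : 0 ≤ elEnergy c h :=
  mul_nonneg (by norm_num) <| sum_nonneg fun z _ => sum_nonneg fun w _ =>
    mul_nonneg (hnn z w) (sq_nonneg _)

theorem elEnergy_le_of_sq_sub_le (hnn : ∀ z w, 0 ≤ c z w) {h : V → ℝ} {k : V → V → ℝ}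
    (hk : ∀ z w, (h z - h w) ^ 2 ≤ k z w) :
    elEnergy c h ≤ (1 / 2) * ∑ z, ∑ w, c z w * k z w := by
  unfold elEnergy
  gcongr with z _ w _
  exacts [hnn z w, hk z w]

theorem mul_sq_sub_le_two_mul_elEnergy (hnn : ∀ z w, 0 ≤ c z w) (a b : V) (h : V → ℝ) :
    c a b * (h a - h b) ^ 2 ≤ 2 * elEnergy c h := by
  have hterm : ∀ z w, 0 ≤ c z w * (h z - h w) ^ 2 := fun z w => mul_nonneg (hnn z w) (sq_nonneg _)
  calc c a b * (h a - h b) ^ 2 ≤ ∑ w, c a w * (h a - h w) ^ 2 :=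
        single_le_sum (fun w _ => hterm a w) (mem_univ b)
    _ ≤ ∑ z, ∑ w, c z w * (h z - h w) ^ 2 :=
        single_le_sum (f := fun z => ∑ w, c z w * (h z - h w) ^ 2)
          (fun z _ => sum_nonneg fun w _ => hterm z w) (mem_univ a)
    _ = 2 * elEnergy c h := by rw [elEnergy]; ring

theorem exists_sq_sub_le_mul_elEnergy_of_adj (hnn : ∀ z w, 0 ≤ c z w) {a b : V}
    (hab : (SimpleGraph.fromRel fun z w => 0 < c z w).Adj a b) :
    ∃ K > 0, ∀ h : V → ℝ, (h a - h b) ^ 2 ≤ K * elEnergy c h := by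
  obtain ⟨-, hab | hba⟩ := hab
  · refine ⟨2 / c a b, by positivity, fun h => ?_⟩
    rw [div_mul_eq_mul_div, le_div_iff₀ hab, mul_comm]
    exact mul_sq_sub_le_two_mul_elEnergy hnn a b h
  · refine ⟨2 / c b a, by positivity, fun h => ?_⟩
    rw [div_mul_eq_mul_div, le_div_iff₀ hba, mul_comm, ← neg_sub, neg_sq]
    exact mul_sq_sub_le_two_mul_elEnergy hnn b a h

theorem exists_sq_sub_le_mul_elEnergy_of_walk (hnn : ∀ z w, 0 ≤ c z w) {a b : V}
    (p : (SimpleGraph.fromRel fun z w => 0 < c z w).Walk a b) :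
    ∃ K > 0, ∀ h : V → ℝ, (h a - h b) ^ 2 ≤ K * elEnergy c h := by
  induction p with
  | nil => exact ⟨1, one_pos, fun h => by simpa using elEnergy_nonneg hnn h⟩
  | @cons u v w hadj _ ih =>
    obtain ⟨K₁, hK₁, h₁⟩ := exists_sq_sub_le_mul_elEnergy_of_adj hnn hadj
    obtain ⟨K₂, hK₂, h₂⟩ := ih
    refine ⟨2 * K₁ + 2 * K₂, by positivity, fun h => ?_⟩
    nlinarith [h₁ h, h₂ h, sq_nonneg (h u - 2 * h v + h w)]

theorem ceff_le_elEnergy (hnn : ∀ z w, 0 ≤ c z w) {x y : V} {h : V → ℝ} (hx : h x = 1)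
    (hy : h y = 0) : ceff c x y ≤ elEnergy c h :=
  csInf_le ⟨0, by rintro _ ⟨k, -, -, rfl⟩; exact elEnergy_nonneg hnn k⟩ ⟨h, hx, hy, rfl⟩

theorem ceff_pos [DecidableEq V] (hnn : ∀ z w, 0 ≤ c z w)
    (hconn : (SimpleGraph.fromRel fun z w => 0 < c z w).Connected) {x y : V} (hxy : x ≠ y) :
    0 < ceff c x y := by
  obtain ⟨K, hK, hKh⟩ := exists_sq_sub_le_mul_elEnergy_of_walk hnn (hconn.preconnected x y).some
  have hne : {E | ∃ h : V → ℝ, h x = 1 ∧ h y = 0 ∧ elEnergy c h = E}.Nonempty :=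
    ⟨_, Pi.single x 1, by simp, by simp [hxy.symm], rfl⟩
  refine (inv_pos.2 hK).trans_le (le_csInf hne ?_)
  rintro _ ⟨h, hx, hy, rfl⟩
  rw [inv_le_iff_one_le_mul₀ hK, mul_comm]
  simpa [hx, hy] using hKh h

end Resistance

section ExclusionDirichletForm

variable {V : Type*} [Fintype V] [DecidableEq V]

def exclusionDirichletForm (c : V → V → ℝ) (α : ℝ) (f : (V → Bool) → ℝ) : ℝ :=
  (1 / 2) * ∑ z, ∑ w, c z w * swapEnergy α f z w

variable {c : V → V → ℝ} {α : ℝ}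

theorem exclusionDirichletForm_nonneg (hnn : ∀ z w, 0 ≤ c z w) (hα0 : 0 ≤ α) (hα1 : α ≤ 1)
    (f : (V → Bool) → ℝ) : 0 ≤ exclusionDirichletForm c α f :=
  mul_nonneg (by norm_num) <| sum_nonneg fun z _ => sum_nonneg fun w _ =>
    mul_nonneg (hnn z w) (swapEnergy_nonneg hα0 hα1 z w)

theorem ceff_mul_swapEnergy_le (hnn : ∀ z w, 0 ≤ c z w) (hα0 : 0 ≤ α) (hα1 : α ≤ 1)
    (f : (V → Bool) → ℝ) (x y : V) :
    ceff c x y * swapEnergy α f x y ≤ exclusionDirichletForm c α f := by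
  rcases (swapEnergy_nonneg (f := f) hα0 hα1 x y).eq_or_lt with hN | hN
  · rw [← hN, mul_zero]
    exact exclusionDirichletForm_nonneg hnn hα0 hα1 f
  set N := swapEnergy α f x y
  set r := swapDist α f x y
  have hr : 0 < r := Real.sqrt_pos.2 hN
  set h : V → ℝ := fun v => swapDist α f v y / r
  have hx : h x = 1 := div_self hr.ne'
  have hy : h y = 0 := by simp [h, swapDist_self]
  have hlip : ∀ z w, (h z - h w) ^ 2 ≤ swapEnergy α f z w / N := fun z w =>
    calc (h z - h w) ^ 2 = (swapDist α f z y - swapDist α f w y) ^ 2 / r ^ 2 := by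
          rw [← div_pow, sub_div]
      _ ≤ swapDist α f z w ^ 2 / r ^ 2 := by
          have := abs_le.1 (abs_swapDist_sub_le (f := f) hα0 hα1 y z w)
          exact div_le_div_of_nonneg_right (sq_le_sq' this.1 this.2) (sq_nonneg r)
      _ = swapEnergy α f z w / N := by rw [sq_swapDist hα0 hα1, sq_swapDist hα0 hα1]
  calc ceff c x y * N ≤ elEnergy c h * N := by gcongr; exact ceff_le_elEnergy hnn hx hy
    _ ≤ exclusionDirichletForm c α f / N * N := by
        gcongr
        refine (elEnergy_le_of_sq_sub_le hnn hlip).trans_eq ?_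
        simp only [exclusionDirichletForm, mul_div_assoc, sum_div]
    _ = exclusionDirichletForm c α f := div_mul_cancel₀ _ hN.ne'

end ExclusionDirichletForm

theorem reff_lower_bound_exclusion_general {V : Type*} [Fintype V] [DecidableEq V]
    (c : V → V → ℝ) (hnn : ∀ z w, 0 ≤ c z w)
    (hconn : (SimpleGraph.fromRel fun z w => 0 < c z w).Connected)
    (α : ℝ) (hα0 : 0 < α) (hα1 : α < 1) (x y : V) (hxy : x ≠ y) :
    (ceff c x y)⁻¹ ≥
      sSup {r : ℝ | ∃ f : (V → Bool) → ℝ,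
        0 < bexp α (fun ζ => (f (ζ ∘ Equiv.swap x y) - f ζ) ^ 2) ∧
        r = bexp α (fun ζ => (f (ζ ∘ Equiv.swap x y) - f ζ) ^ 2) /
          ((1 / 2) * ∑ z, ∑ w, c z w *
            bexp α (fun ζ => (f (ζ ∘ Equiv.swap z w) - f ζ) ^ 2))} := by
  have hceff : 0 < ceff c x y := ceff_pos hnn hconn hxy
  refine Real.sSup_le ?_ (inv_nonneg.2 hceff.le)
  rintro _ ⟨f, hN, rfl⟩
  change 0 < swapEnergy α f x y at hN
  change swapEnergy α f x y / exclusionDirichletForm c α f ≤ _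
  have key := ceff_mul_swapEnergy_le hnn hα0.le hα1.le f x y
  rw [div_le_iff₀ ((mul_pos hceff hN).trans_le key), le_inv_mul_iff₀ hceff]
  exact key

theorem reff_lower_bound_exclusion {V : Type*} [Fintype V] [DecidableEq V]
    (c : V → V → ℝ) (hnn : ∀ z w, 0 ≤ c z w) (hsymm : ∀ z w, c z w = c w z)
    (hdiag : ∀ z, c z z = 0)
    (hconn : (SimpleGraph.fromRel fun z w => 0 < c z w).Connected)
    (α : ℝ) (hα0 : 0 < α) (hα1 : α < 1) (x y : V) (hxy : x ≠ y) :
    (ceff c x y)⁻¹ ≥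
      sSup {r : ℝ | ∃ f : (V → Bool) → ℝ,
        0 < bexp α (fun ζ => (f (ζ ∘ Equiv.swap x y) - f ζ) ^ 2) ∧
        r = bexp α (fun ζ => (f (ζ ∘ Equiv.swap x y) - f ζ) ^ 2) /
          ((1 / 2) * ∑ z, ∑ w, c z w *
            bexp α (fun ζ => (f (ζ ∘ Equiv.swap z w) - f ζ) ^ 2))} :=
  reff_lower_bound_exclusion_general c hnn hconn α hα0 hα1 x y hxy
end
end
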